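/- Leaf node elimination in structured relational models: let M = (V, E, 𝒮) be a structured model, X ⊆ V, and v ∈ V \ X a leaf node of the dag (V,E) (no outgoing edges, so v is not a parent of any node). Then (⊗𝒮) ↓ X = (⊗(𝒮 \ {s_v})) ↓ X. -/
import Mathlib


/-- A relational structure over variables of type `ι`: a domain of variables and a
set of (total representatives of) assignments, cylindrical over the domain. -/
structure RelStr (ι : Type*) where
  dom : Set ι
  A : Set (ι → Bool)
  cyl : ∀ u v : ι → Bool, (∀ x ∈ dom, u x = v x) → u ∈ A → v ∈ A

namespace RelStr
variable {ι : Type*}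

/-- Combination (join) of relational structures. -/
def comb (s t : RelStr ι) : RelStr ι where
  dom := s.dom ∪ t.dom
  A := s.A ∩ t.A
  cyl := fun u v h hu =>
    ⟨s.cyl u v (fun x hx => h x (Or.inl hx)) hu.1,
     t.cyl u v (fun x hx => h x (Or.inr hx)) hu.2⟩

/-- Marginalization (projection) of a relational structure onto a set of variables. -/
def marg (s : RelStr ι) (X : Set ι) : RelStr ι where
  dom := s.dom ∩ X
  A := {u | ∃ a ∈ s.A, ∀ x ∈ s.dom ∩ X, u x = a x}
  cyl := fun u v h hu => by
    obtain ⟨a, ha, hag⟩ := hu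
    exact ⟨a, ha, fun x hx => (h x hx).symm.trans (hag x hx)⟩

/-- The full relational structure `e_X` on variables `X`. -/
def full (X : Set ι) : RelStr ι where
  dom := X
  A := Set.univ
  cyl := fun _ _ _ _ => trivial

/-- Variable elimination. -/
def elim (s : RelStr ι) (x : ι) : RelStr ι := s.marg (s.dom \ {x})

/-- Combination of a finite family (list) of relational structures. -/
def bigComb (l : List (RelStr ι)) : RelStr ι := l.foldr comb (full ∅)

end RelStr

/-- A structured relational model: a finite dag `(V, E)` together with a local
relational structure `s v` for each node `v ∈ V`, whose domain is `v` together
with its parents, and which does not constrain its parents. -/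
structure StructModel (ι : Type*) where
  V : Finset ι
  E : ι → ι → Prop
  s : ι → RelStr ι
  acyclic : ∀ v, ¬ Relation.TransGen E v v
  edge_mem : ∀ u v, E u v → u ∈ V ∧ v ∈ V
  dom_eq : ∀ v ∈ V, (s v).dom = insert v {u | E u v}
  no_constrain : ∀ v ∈ V, (s v).marg {u | E u v} = RelStr.full {u | E u v}

/-- The combined relation `⊗𝒮` of a structured model. -/
noncomputable def StructModel.combined {ι : Type*} (M : StructModel ι) : RelStr ι :=
  RelStr.bigComb (M.V.toList.map M.s)


namespace RelStr
variable {ι : Type*}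

theorem ext' {s t : RelStr ι} (hd : s.dom = t.dom) (hA : s.A = t.A) : s = t := by
  cases s; cases t; simp_all

theorem mem_dom_bigComb (l : List (RelStr ι)) (x : ι) :
    x ∈ (bigComb l).dom ↔ ∃ s ∈ l, x ∈ s.dom := by
  induction l with
  | nil => simp [bigComb, full]
  | cons a l ih =>
    show x ∈ (comb a (bigComb l)).dom ↔ _
    simp [comb, ih]

theorem mem_A_bigComb (l : List (RelStr ι)) (u : ι → Bool) :
    u ∈ (bigComb l).A ↔ ∀ s ∈ l, u ∈ s.A := by
  induction l with
  | nil => simp [bigComb, full]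
  | cons a l ih =>
    show u ∈ (comb a (bigComb l)).A ↔ _
    simp only [comb, Set.mem_inter_iff, ih, List.mem_cons]
    constructor
    · rintro ⟨h1, h2⟩ s (rfl | hs)
      · exact h1
      · exact h2 s hs
    · exact fun h => ⟨h a (Or.inl rfl), fun s hs => h s (Or.inr hs)⟩

end RelStr

open RelStr in
/-- Leaf node elimination: if `v ∈ V \ X` is a leaf of the dag, then the local
relation `s_v` can be dropped without changing the marginal onto `X`:
`(⊗𝒮) ↓ X = (⊗(𝒮 \ {s_v})) ↓ X`. -/
theorem structModel_leaf_elim {ι : Type*} [DecidableEq ι] (M : StructModel ι) (X : Set ι)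
    (v : ι) (hv : v ∈ M.V) (hvX : v ∉ X) (hleaf : ∀ u, ¬ M.E v u) :
    marg M.combined X = marg (bigComb ((M.V.erase v).toList.map M.s)) X := by
  classical
  have hnotself : ¬ M.E v v := hleaf v
  set S := M.combined with hS
  set T := RelStr.bigComb ((M.V.erase v).toList.map M.s) with hT
  -- membership characterizations
  have hSdom : ∀ x, x ∈ S.dom ↔ ∃ w ∈ M.V, x ∈ (M.s w).dom := by
    intro x
    rw [hS, StructModel.combined, RelStr.mem_dom_bigComb]
    simp
  have hTdom : ∀ x, x ∈ T.dom ↔ ∃ w ∈ M.V.erase v, x ∈ (M.s w).dom := by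
    intro x
    rw [hT, RelStr.mem_dom_bigComb]
    simp
  have hSA : ∀ u, u ∈ S.A ↔ ∀ w ∈ M.V, u ∈ (M.s w).A := by
    intro u
    rw [hS, StructModel.combined, RelStr.mem_A_bigComb]
    simp
  have hTA : ∀ u, u ∈ T.A ↔ ∀ w ∈ M.V.erase v, u ∈ (M.s w).A := by
    intro u
    rw [hT, RelStr.mem_A_bigComb]
    simp only [List.mem_map, Finset.mem_toList, Finset.mem_erase, forall_exists_index, and_imp]
    constructor
    · exact fun h w h1 h2 => h (M.s w) w h1 h2 rfl
    · rintro h s w h1 h2 rfl; exact h w h1 h2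
  have hvT : v ∉ T.dom := by
    rw [hTdom]
    rintro ⟨w, hw, hvw⟩
    rw [Finset.mem_erase] at hw
    rw [M.dom_eq w hw.2, Set.mem_insert_iff] at hvw
    rcases hvw with h | h
    · exact hw.1 h.symm
    · exact hleaf w h
  -- domains agree on X
  have hdom : S.dom ∩ X = T.dom ∩ X := by
    ext x
    constructor
    · rintro ⟨hx, hxX⟩
      refine ⟨?_, hxX⟩
      obtain ⟨w, hwV, hxw⟩ := (hSdom x).1 hx
      by_cases hwv : w = v
      · rw [hwv] at hxw
        rw [M.dom_eq v hv, Set.mem_insert_iff] at hxw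
        rcases hxw with h | h
        · exact absurd (h ▸ hxX) hvX
        · -- x is a parent of v
          have hxV : x ∈ M.V := (M.edge_mem x v h).1
          have hxv : x ≠ v := fun he => hnotself (he ▸ h)
          exact (hTdom x).2 ⟨x, Finset.mem_erase.2 ⟨hxv, hxV⟩,
            (M.dom_eq x hxV).symm ▸ Set.mem_insert x _⟩
      · exact (hTdom x).2 ⟨w, Finset.mem_erase.2 ⟨hwv, hwV⟩, hxw⟩
    · rintro ⟨hx, hxX⟩
      refine ⟨?_, hxX⟩
      obtain ⟨w, hw, hxw⟩ := (hTdom x).1 hx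
      exact (hSdom x).2 ⟨w, (Finset.mem_erase.1 hw).2, hxw⟩
  apply RelStr.ext'
  · show S.dom ∩ X = T.dom ∩ X
    exact hdom
  · ext u
    show (∃ a ∈ S.A, ∀ x ∈ S.dom ∩ X, u x = a x) ↔
         (∃ a ∈ T.A, ∀ x ∈ T.dom ∩ X, u x = a x)
    constructor
    · rintro ⟨a, haS, hag⟩
      refine ⟨a, ?_, ?_⟩
      · exact (hTA a).2 fun w hw => (hSA a).1 haS w (Finset.mem_erase.1 hw).2
      · rw [← hdom]; exact hag
    · rintro ⟨a, haT, hag⟩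
      -- extend a to satisfy s v using no_constrain
      have hfull := M.no_constrain v hv
      have : a ∈ ((M.s v).marg {u | M.E u v}).A := by
        rw [hfull]; trivial
      obtain ⟨b, hb, hab⟩ := this
      set a' : ι → Bool := fun x => if x = v then b x else a x with ha'
      have ha'v : a' ∈ (M.s v).A := by
        apply (M.s v).cyl b a' _ hb
        intro x hx
        rw [M.dom_eq v hv, Set.mem_insert_iff] at hx
        rcases hx with h | h
        · subst h; simp [ha']
        · have hxv : x ≠ v := fun he => hnotself (he ▸ h)
          have : a x = b x := hab x ⟨(M.dom_eq v hv).symm ▸ Set.mem_insert_of_mem _ h, h⟩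
          simp [ha', hxv, this.symm]
      have ha'T : a' ∈ T.A := by
        apply T.cyl a a' _ haT
        intro x hx
        have hxv : x ≠ v := fun he => hvT (he ▸ hx)
        simp [ha', hxv]
      refine ⟨a', ?_, ?_⟩
      · apply (hSA a').2
        intro w hw
        by_cases hwv : w = v
        · exact hwv ▸ ha'v
        · exact (hTA a').1 ha'T w (Finset.mem_erase.2 ⟨hwv, hw⟩)
      · intro x hx
        have hxv : x ≠ v := fun he => hvX (he ▸ hx.2)
        have : a' x = a x := by simp [ha', hxv]
        rw [this]
        exact hag x (hdom ▸ hx)
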